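/- Let f(x) = ∑_{m≥0} q^{C(m+1,2)} x^m over the field of rational functions ℚ(q) (or over ℚ[q], noting f has constant term 1 so it is invertible as a power series). For k ≥ 1 write 1/f(x)^k = ∑_{n≥0} u_k(n,q) x^n. Then for n ≥ 1, u_k(n,q) = -q^n · ∑_{j=0}^{n-1} (-1)^j · ⟨n-1, j⟩_q · C(k+j, k-1), where ⟨m, j⟩_q is the coefficient of x^{m-j} in f(x)^{j+1}. -/

import Mathlib

/-!
Writing `g = f - 1`, the functional equation `f(x) = 1 + q x f(q x)` says `g = rescale q (x f)`, so the
`x^n`-coefficient of `g^j` is `q^n` times the `x^(n-j)`-coefficient of `f^j`. Substituting `-g` into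
`(1 - x)^{-k} = ∑ C(k-1+j, k-1) x^j` expands `f^{-k} = (1 + g)^{-k}` as `∑ (-1)^j C(k-1+j, k-1) g^j`,
and the `j = 0` term does not contribute for `n ≥ 1`.
-/

noncomputable def f : PowerSeries (Polynomial ℚ) :=
  PowerSeries.mk fun m => (Polynomial.X : Polynomial ℚ) ^ Nat.choose (m + 1) 2

noncomputable def angle (n k : ℕ) : Polynomial ℚ :=
  PowerSeries.coeff (R := Polynomial ℚ) (n - k) (f ^ (k + 1))

/-- `u_k(n,q)`, the coefficient of `x^n` in `f(x)^{-k}` (using the inverse of `f`,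
which exists since the constant coefficient of `f` is `1`). -/
noncomputable def u (k n : ℕ) : Polynomial ℚ :=
  PowerSeries.coeff (R := Polynomial ℚ) n ((PowerSeries.invOfUnit f 1) ^ k)

open PowerSeries

namespace PowerSeries

variable {R : Type*} [CommRing R]

theorem coeff_pow_eq_zero_of_lt {g : R⟦X⟧} (hg : constantCoeff g = 0) {n j : ℕ} (h : n < j) :
    coeff n (g ^ j) = 0 :=
  X_pow_dvd_iff.mp (pow_dvd_pow_of_dvd (X_dvd_iff.mpr hg) j) n h

theorem coeff_eq_sum_of_mul_one_add_pow_eq_one {g h : R⟦X⟧} (hg : constantCoeff g = 0) {d : ℕ}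
    (hh : h * (1 + g) ^ (d + 1) = 1) (n : ℕ) :
    coeff n h = ∑ j ∈ Finset.range (n + 1), (-1) ^ j * (d + j).choose d * coeff n (g ^ j) := by
  have hs : HasSubst (-g) := HasSubst.of_constantCoeff_zero' (by simp [hg])
  set s : R⟦X⟧ := (mk fun j ↦ ((d + j).choose d : R)).subst (-g)
  have hs_inv : (1 + g) ^ (d + 1) * s = 1 := by
    have := congrArg (substAlgHom (R := R) hs) (mk_add_choose_mul_one_sub_pow_eq_one (S := R) d)
    rwa [map_mul, map_pow, map_sub, map_one, substAlgHom_X, sub_neg_eq_add, coe_substAlgHom,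
      mul_comm] at this
  rw [left_inv_eq_right_inv hh hs_inv, coeff_subst' hs,
    finsum_eq_sum_of_support_subset (s := Finset.range (n + 1))]
  · refine Finset.sum_congr rfl fun j _ ↦ ?_
    have hneg : (-g) ^ j = C ((-1 : R) ^ j) * g ^ j := by rw [neg_pow, map_pow, map_neg, map_one]
    rw [coeff_mk, smul_eq_mul, hneg, coeff_C_mul]
    ring
  · refine Function.support_subset_iff'.mpr fun j hj ↦ ?_
    rw [coeff_pow_eq_zero_of_lt (by simp [hg]) (by simpa using hj), smul_zero]

end PowerSeries

theorem constantCoeff_f_sub_one : constantCoeff (f - 1) = 0 := by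
  simp [f]

theorem f_sub_one_eq_rescale : f - 1 = rescale Polynomial.X (X * f) := by
  ext (_ | m)
  · simp [f]
  · rw [coeff_rescale, coeff_succ_X_mul, map_sub, coeff_one, if_neg m.succ_ne_zero, sub_zero, f,
      coeff_mk, coeff_mk, ← pow_add, Nat.choose_succ_succ' (m + 1), Nat.choose_one_right]

theorem coeff_f_sub_one_pow {n j : ℕ} (h : j ≤ n) :
    coeff n ((f - 1) ^ j) = Polynomial.X ^ n * coeff (n - j) (f ^ j) := by
  rw [f_sub_one_eq_rescale, ← map_pow, coeff_rescale, mul_pow, coeff_X_pow_mul', if_pos h]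

theorem neg_power_coeff (k n : ℕ) (hk : 1 ≤ k) (hn : 1 ≤ n) :
    u k n = -Polynomial.X ^ n *
      ∑ j ∈ Finset.range n,
        (-1) ^ j * angle (n - 1) j * ((k + j).choose (k - 1) : Polynomial ℚ) := by
  obtain ⟨d, rfl⟩ : ∃ d, k = d + 1 := ⟨k - 1, by omega⟩
  have hinv : invOfUnit f 1 ^ (d + 1) * (1 + (f - 1)) ^ (d + 1) = 1 := by
    rw [add_sub_cancel, ← mul_pow, mul_comm, mul_invOfUnit f 1 (by simp [f]), one_pow]
  rw [u, coeff_eq_sum_of_mul_one_add_pow_eq_one constantCoeff_f_sub_one hinv,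
    Finset.sum_range_succ', pow_zero, pow_zero, coeff_one, if_neg (by omega), mul_zero, add_zero,
    Finset.mul_sum]
  refine Finset.sum_congr rfl fun j hj ↦ ?_
  rw [coeff_f_sub_one_pow (by simpa using hj), angle, Nat.sub_sub, add_comm 1 j,
    Nat.add_sub_cancel, add_assoc, add_comm 1 j]
  ring
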